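/- A finite sequence π of distinct keys from a linear order is equal to Postorder(T) for some binary search tree T if and only if π avoids the pattern (3,1,2), i.e., there are no indices i < j < k such that π_j < π_k < π_i. -/

import Mathlib

/-- Binary trees with keys at internal nodes. -/
inductive BT (α : Type) where
  | leaf : BT α
  | node : BT α → α → BT α → BT α
deriving DecidableEq

namespace BT

variable {α : Type} [LinearOrder α]

/-- The list of keys of a tree, in symmetric (inorder) order. -/
def keys : BT α → List α
  | leaf => []
  | node l v r => keys l ++ v :: keys r

/-- The number of nodes of a tree. -/
def size : BT α → ℕ
  | leaf => 0
  | node l _ r => size l + size r + 1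

/-- The symmetric-order (binary search tree) property. -/
def IsBST : BT α → Prop
  | leaf => True
  | node l v r => (∀ x ∈ l.keys, x < v) ∧ (∀ x ∈ r.keys, v < x) ∧ l.IsBST ∧ r.IsBST

/-- Preorder of a binary tree: root, then left subtree, then right subtree. -/
def preorder : BT α → List α
  | leaf => []
  | node l v r => v :: (preorder l ++ preorder r)

/-- Postorder of a binary tree: left subtree, right subtree, then root. -/
def postorder : BT α → List α
  | leaf => []
  | node l v r => postorder l ++ postorder r ++ [v]

/-- Reversed preorder: root, then right subtree, then left subtree
(the preorder of the mirror image). -/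
def revPreorder : BT α → List α
  | leaf => []
  | node l v r => v :: (revPreorder r ++ revPreorder l)

/-- Standard leaf insertion into a binary search tree. -/
def insertKey : BT α → α → BT α
  | leaf, x => node leaf x leaf
  | node l v r, x =>
    if x < v then node (insertKey l x) v r
    else if v < x then node l v (insertKey r x)
    else node l v r

/-- The depth (number of edges from the root) of the node with key `x`,
located by binary search. -/
def depthOf : BT α → α → ℕ
  | leaf, _ => 0
  | node l v r, x =>
    if x < v then depthOf l x + 1
    else if v < x then depthOf r x + 1
    else 0

/-- The search path to the key `x`: `false` records a step to a left child,
`true` a step to a right child. -/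
def pathTo : BT α → α → List Bool
  | leaf, _ => []
  | node l v r, x =>
    if x < v then false :: pathTo l x
    else if v < x then true :: pathTo r x
    else []

/-- The left-depth of the node with key `x`: the number of left-child edges
on the path from the root to it. -/
def leftDepthKey : BT α → α → ℕ
  | leaf, _ => 0
  | node l v r, x =>
    if x < v then leftDepthKey l x + 1
    else if v < x then leftDepthKey r x
    else 0

/-- The subtree rooted at the node with key `x` (empty if `x` is absent). -/
def subtreeAt : BT α → α → BT α
  | leaf, _ => leaf
  | node l v r, x =>
    if x < v then subtreeAt l x
    else if v < x then subtreeAt r x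
    else node l v r

/-- The key at the root, if any. -/
def rootKey : BT α → Option α
  | leaf => none
  | node _ v _ => some v

/-- The key of the parent of the node with key `x`, if any. -/
def parentKey : BT α → α → Option α
  | leaf, _ => none
  | node l v r, x =>
    if x < v then (if l.rootKey = some x then some v else l.parentKey x)
    else if v < x then (if r.rootKey = some x then some v else r.parentKey x)
    else none

/-- A step of the context (zipper) describing the search path from the root
to the current subtree: `inL v r` means the current subtree is the left child
of a node with key `v` and right subtree `r`; `inR l v` means it is the right
child of a node with key `v` and left subtree `l`. -/
inductive Ctx (α : Type) where
  | inL : α → BT α → Ctx α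
  | inR : BT α → α → Ctx α

/-- Descend along the search path for `x`, recording the context.
The head of the returned list corresponds to the immediate parent. -/
def descend : BT α → α → List (Ctx α) → List (Ctx α) × BT α
  | leaf, _, acc => (acc, leaf)
  | node l v r, x, acc =>
    if x < v then descend l x (Ctx.inL v r :: acc)
    else if v < x then descend r x (Ctx.inR l v :: acc)
    else (acc, node l v r)

/-- Reattach a subtree into its context, with no rotations. -/
def rebuild : BT α → List (Ctx α) → BT α
  | t, [] => t
  | t, Ctx.inL v r :: cs => rebuild (node t v r) cs
  | t, Ctx.inR l v :: cs => rebuild (node l v t) cs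

/-- Bottom-up splay steps: repeatedly apply zig / zig-zig / zig-zag steps to
the current subtree (rooted at the node being splayed) until the context is
exhausted. -/
def splayLoop : BT α → List (Ctx α) → BT α
  | t, [] => t
  | node a x b, [Ctx.inL v r] => node a x (node b v r)          -- zig
  | node a x b, [Ctx.inR l v] => node (node l v a) x b          -- zig
  | node a x b, Ctx.inL p pr :: Ctx.inL g gr :: cs =>           -- zig-zig
      splayLoop (node a x (node b p (node pr g gr))) cs
  | node a x b, Ctx.inL p pr :: Ctx.inR gl g :: cs =>           -- zig-zag
      splayLoop (node (node gl g a) x (node b p pr)) cs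
  | node a x b, Ctx.inR pl p :: Ctx.inR gl g :: cs =>           -- zig-zig
      splayLoop (node (node (node gl g pl) p a) x b) cs
  | node a x b, Ctx.inR pl p :: Ctx.inL g gr :: cs =>           -- zig-zag
      splayLoop (node (node pl p a) x (node b g gr)) cs
  | leaf, cs => rebuild leaf cs   -- unreachable when the splayed key is present

/-- Splaying the key `x`: if `x` occurs in the tree, bring its node to the
root by bottom-up splay steps; otherwise leave the tree unchanged. -/
def splay (x : α) (t : BT α) : BT α :=
  match descend t x [] with
  | (_, leaf) => t
  | (cs, found) => splayLoop found cs

/-- `α`-weight-balance in the sense of Nievergelt–Reingold: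
at each node, `min(|L|,|R|) + 1 ≥ α * (|x| + 1)`. -/
def WeightBalanced (a : ℝ) : BT α → Prop
  | leaf => True
  | node l _ r =>
      (min l.size r.size + 1 : ℝ) ≥ a * ((l.size + r.size + 1 : ℕ) + 1 : ℝ) ∧
      WeightBalanced a l ∧ WeightBalanced a r

/-- The rank of `x` in `t`: the number of keys of `t` that are `≤ x`. -/
def rank (t : BT α) (x : α) : ℕ := (t.keys.filter (fun y => y ≤ x)).length

end BT

section Defs

variable {α : Type} [LinearOrder α]

/-- The insertion tree of a sequence: leaf-insert the keys in order. -/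
def bstOf (π : List α) : BT α := π.foldl BT.insertKey BT.leaf

/-- `q` is a sub-root: a node of `t` not yet touched whose parent is touched,
where `touched` is the list of touched keys. -/
def IsSubRoot (t : BT α) (touched : List α) (q : α) : Prop :=
  q ∈ t.keys ∧ q ∉ touched ∧ ∃ p, t.parentKey q = some p ∧ p ∈ touched

/-- π avoids the pattern (2,3,1). -/
def Avoids231 (π : List α) : Prop :=
  ¬ ∃ i j k : Fin π.length, i < j ∧ j < k ∧ π.get k < π.get i ∧ π.get i < π.get j

/-- π avoids the pattern (3,1,2). -/
def Avoids312 (π : List α) : Prop :=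
  ¬ ∃ i j k : Fin π.length, i < j ∧ j < k ∧ π.get j < π.get k ∧ π.get k < π.get i

/-- π avoids the pattern (2,1,3). -/
def Avoids213 (π : List α) : Prop :=
  ¬ ∃ i j k : Fin π.length, i < j ∧ j < k ∧ π.get j < π.get i ∧ π.get i < π.get k

/-- π contains a strictly decreasing subsequence of length `k`. -/
def HasDecreasingSubseq (π : List α) (k : ℕ) : Prop :=
  ∃ s : List α, s.Sublist π ∧ s.length = k ∧ s.Chain' (· > ·)

/-- Splay the keys of a list in order, starting from `t`. -/
def splaySeq (π : List α) (t : BT α) : BT α := π.foldl (fun s x => BT.splay x s) t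

/-- The cost of splaying a sequence of keys starting from `t`:
each splay costs the current depth of the requested key plus one. -/
def splayCost : BT α → List α → ℕ
  | _, [] => 0
  | t, x :: xs => (t.depthOf x + 1) + splayCost (BT.splay x t) xs

/-- The cost of insertion splaying a sequence of keys starting from `t`:
each key is leaf-inserted, then the new node is splayed, at a cost of
its depth after insertion plus one. -/
def insertSplayCost : BT α → List α → ℕ
  | _, [] => 0
  | t, x :: xs =>
    ((t.insertKey x).depthOf x + 1) + insertSplayCost (BT.splay x (t.insertKey x)) xs

/-- `DF rk xs` = Σ_{i≥2} log₂(|rk(x_i) − rk(x_{i−1})| + 1). -/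
noncomputable def DF (rk : α → ℕ) (xs : List α) : ℝ :=
  ((xs.zip xs.tail).map
    (fun p => Real.logb 2 (|(rk p.2 : ℝ) - (rk p.1 : ℝ)| + 1))).sum

/-- The rank of `x` within the sequence `σ` itself. -/
def rankIn (σ : List α) (x : α) : ℕ := (σ.filter (fun y => y ≤ x)).length

/-- The dynamic-finger sum of a sequence, with ranks computed in the
sequence itself. -/
noncomputable def DFseq (σ : List α) : ℝ := DF (rankIn σ) σ

end Defs

/-! A 312 pattern `b < c < a` in the postorder `P(l) ++ P(r) ++ [v]` of a BST cannot straddle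
the blocks, since every key of `P(l)` is below `v` and every key of `P(r)` above it; so it lies
inside one of the subtrees. Conversely, if `σ ++ [v]` avoids 312 then no key above `v` precedes a
key below `v` in `σ`, so `σ` splits into a block below `v` followed by a block above `v`, and these
are the postorders of the two subtrees, built recursively. -/

section Postorder312

open List

theorem BT.mem_postorder {α : Type} {t : BT α} {x : α} : x ∈ t.postorder ↔ x ∈ t.keys := by
  induction t with
  | leaf => rfl
  | node l v r ihl ihr => simp [BT.postorder, BT.keys, ihl, ihr, or_comm, or_left_comm]

variable {α : Type} [LinearOrder α]

theorem avoids312_iff_forall_sublist {π : List α} :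
    Avoids312 π ↔ ∀ a b c : α, [a, b, c] <+ π → ¬ (b < c ∧ c < a) := by
  constructor
  · rintro h a b c hsub ⟨hbc, hca⟩
    obtain ⟨f, hf⟩ := sublist_iff_exists_fin_orderEmbedding_get_eq.mp hsub
    have ha : a = π.get (f 0) := hf 0
    have hb : b = π.get (f 1) := hf 1
    have hc : c = π.get (f 2) := hf 2
    exact h ⟨f 0, f 1, f 2, f.strictMono (Fin.mk_lt_mk.mpr zero_lt_one),
      f.strictMono (Fin.mk_lt_mk.mpr one_lt_two), hb ▸ hc ▸ hbc, hc ▸ ha ▸ hca⟩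
  · rintro h ⟨i, j, k, hij, hjk, hjk', hki⟩
    have hmono : StrictMono ![i, j, k] := Fin.strictMono_iff_lt_succ.mpr (by
      intro n; fin_cases n <;> assumption)
    refine h _ _ _ (sublist_iff_exists_fin_orderEmbedding_get_eq.mpr
      ⟨OrderEmbedding.ofStrictMono _ hmono, fun n => ?_⟩) ⟨hjk', hki⟩
    fin_cases n <;> rfl

theorem Avoids312.sublist {s π : List α} (h : Avoids312 π) (hs : s <+ π) : Avoids312 s := by
  rw [avoids312_iff_forall_sublist] at h ⊢
  exact fun a b c habc => h a b c (habc.trans hs)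

theorem Avoids312.append {L R : List α} (hL : Avoids312 L) (hR : Avoids312 R)
    (hLR : ∀ x ∈ L, ∀ y ∈ R, x < y) : Avoids312 (L ++ R) := by
  rw [avoids312_iff_forall_sublist] at hL hR ⊢
  rintro a b c hsub ⟨hbc, hca⟩
  obtain ⟨l₁, l₂, hsplit, h₁, h₂⟩ := sublist_append_iff.mp hsub
  rcases l₁ with _ | ⟨x, l₁⟩
  · exact hR a b c (hsplit ▸ h₂) ⟨hbc, hca⟩
  rcases l₂.eq_nil_or_concat' with rfl | ⟨l₂, y, rfl⟩
  · exact hL a b c (by simpa [hsplit] using h₁) ⟨hbc, hca⟩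
  have hax : a = x := (cons.inj hsplit).1
  have hcy : c = y := (append_singleton_inj (as := [a, b]) (bs := x :: l₁ ++ l₂)).mp
    (by rw [append_assoc]; exact hsplit) |>.2
  exact (hLR a (h₁.subset (by simp [hax])) c (h₂.subset (by simp [hcy]))).not_gt hca

theorem Avoids312.append_singleton {σ : List α} {v : α} (h : Avoids312 σ)
    (hv : ∀ x ∈ σ, v < x) : Avoids312 (σ ++ [v]) := by
  rw [avoids312_iff_forall_sublist] at h ⊢
  rintro a b c hsub ⟨hbc, hca⟩
  obtain ⟨l₁, l₂, hsplit, h₁, h₂⟩ := sublist_append_iff.mp hsub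
  rcases sublist_singleton.mp h₂ with rfl | rfl
  · exact h a b c (by simpa [hsplit] using h₁) ⟨hbc, hca⟩
  obtain ⟨rfl, rfl⟩ : [a, b] = l₁ ∧ c = v := append_singleton_inj.mp hsplit
  exact (hv b (h₁.subset (by simp))).not_gt hbc

theorem Avoids312.exists_append_of_append_singleton {σ : List α} {v : α}
    (h : Avoids312 (σ ++ [v])) (hv : v ∉ σ) :
    ∃ L R, σ = L ++ R ∧ (∀ x ∈ L, x < v) ∧ ∀ y ∈ R, v < y := by
  rw [avoids312_iff_forall_sublist] at h
  refine ⟨σ.takeWhile (· < v), σ.dropWhile (· < v), takeWhile_append_dropWhile.symm,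
    fun x hx => by simpa using mem_takeWhile_imp hx, ?_⟩
  have hne : ∀ y ∈ σ, y ≠ v := fun y hy e => hv (e ▸ hy)
  have hsub : σ.dropWhile (· < v) <+ σ := dropWhile_sublist _
  have hhead := head?_dropWhile_not (· < v) σ
  rcases hd : σ.dropWhile (· < v) with _ | ⟨z, R⟩
  · simp
  rw [hd] at hsub hhead
  have hz : v < z := lt_of_le_of_ne (by simpa using hhead) (hne z (hsub.subset (by simp))).symm
  intro y hy
  rcases mem_cons.mp hy with rfl | hy
  · exact hz
  -- a key `y < v` after the key `z > v` would form the pattern `z, y, v`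
  refine lt_of_le_of_ne (not_lt.mp fun hyv => h z y v ?_ ⟨hyv, hz⟩)
    (hne y (hsub.subset (by simp [hy]))).symm
  exact ((cons_sublist_cons.mpr (singleton_sublist.mpr hy)).trans hsub).append (Sublist.refl [v])

theorem BT.IsBST.avoids312_postorder {t : BT α} (ht : t.IsBST) : Avoids312 t.postorder := by
  induction t with
  | leaf => rintro ⟨i, -⟩; exact i.elim0
  | node l v r ihl ihr =>
    obtain ⟨hl, hr, hlb, hrb⟩ := ht
    rw [BT.postorder, append_assoc]
    refine (ihl hlb).append ((ihr hrb).append_singleton fun y hy => hr y (mem_postorder.mp hy)) ?_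
    intro x hx y hy
    have hxv : x < v := hl x (mem_postorder.mp hx)
    rcases mem_append.mp hy with hy | hy
    · exact hxv.trans (hr y (mem_postorder.mp hy))
    · rwa [eq_of_mem_singleton hy]

theorem exists_isBST_postorder_eq_of_avoids312 (π : List α) (hnd : π.Nodup) (h : Avoids312 π) :
    ∃ T : BT α, T.IsBST ∧ T.postorder = π := by
  rcases π.eq_nil_or_concat' with rfl | ⟨σ, v, rfl⟩
  · exact ⟨.leaf, trivial, rfl⟩
  have hv : v ∉ σ := fun hv => disjoint_of_nodup_append hnd hv (mem_singleton_self v)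
  obtain ⟨L, R, rfl, hL, hR⟩ := h.exists_append_of_append_singleton hv
  have hLs : L <+ L ++ R ++ [v] := (sublist_append_left L R).trans (sublist_append_left _ _)
  have hRs : R <+ L ++ R ++ [v] := (sublist_append_right L R).trans (sublist_append_left _ _)
  obtain ⟨TL, hTL, rfl⟩ :=
    exists_isBST_postorder_eq_of_avoids312 L (hnd.sublist hLs) (h.sublist hLs)
  obtain ⟨TR, hTR, rfl⟩ :=
    exists_isBST_postorder_eq_of_avoids312 R (hnd.sublist hRs) (h.sublist hRs)
  exact ⟨.node TL v TR, ⟨fun x hx => hL x (BT.mem_postorder.mpr hx),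
    fun y hy => hR y (BT.mem_postorder.mpr hy), hTL, hTR⟩, rfl⟩
termination_by π.length
decreasing_by all_goals subst_vars; simp only [length_append, length_singleton]; omega

end Postorder312

/-- A sequence of distinct keys is the postorder of some binary search tree
iff it avoids the pattern (3,1,2). -/
theorem postorder_iff_avoids312 {α : Type} [LinearOrder α]
    (π : List α) (hnd : π.Nodup) :
    (∃ T : BT α, T.IsBST ∧ T.postorder = π) ↔ Avoids312 π := by
  exact ⟨fun ⟨_, hT, hπ⟩ => hπ ▸ hT.avoids312_postorder,
    exists_isBST_postorder_eq_of_avoids312 π hnd⟩
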